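/- There do not exist values v_x(1), v_x(2), v_x(3), v_y(1), v_y(2), v_y(3) ∈ {−1, +1} such that v_x(1)·v_y(2)·v_y(3) = 1, v_y(1)·v_x(2)·v_y(3) = 1, v_y(1)·v_y(2)·v_x(3) = 1, and v_x(1)·v_x(2)·v_x(3) = −1. -/
import Mathlib

theorem stmt13 :
    ¬ ∃ vx vy : Fin 3 → ℤ,
      (∀ i, vx i = 1 ∨ vx i = -1) ∧ (∀ i, vy i = 1 ∨ vy i = -1) ∧
      vx 0 * vy 1 * vy 2 = 1 ∧
      vy 0 * vx 1 * vy 2 = 1 ∧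
      vy 0 * vy 1 * vx 2 = 1 ∧
      vx 0 * vx 1 * vx 2 = -1 := by
  rintro ⟨vx, vy, hx, hy, h1, h2, h3, h4⟩
  rcases hx 0 with a|a <;> rcases hx 1 with b|b <;> rcases hx 2 with c|c <;>
    rcases hy 0 with d|d <;> rcases hy 1 with e|e <;> rcases hy 2 with f|f <;>
    simp [a,b,c,d,e,f] at h1 h2 h3 h4
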